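/- For any simple digraph D on {1,…,n} with n ≥ 2, if α ∈ ⟨D⟩ has rank 1 (i.e. α is a constant map), then ℓ(D, α) = n − 1. -/

import Mathlib

noncomputable section

variable {V : Type*}

/-- The arc `(a→b)`: the map sending `a` to `b` and fixing every other point. -/
def arcMap [DecidableEq V] (a b : V) : V → V := fun x => if x = a then b else x

/-- Evaluate a word of arcs, applying the arcs from left to right. -/
def wordEval [DecidableEq V] (w : List (V × V)) : V → V :=
  fun x => w.foldl (fun y e => arcMap e.1 e.2 y) x

/-- `α ∈ ⟨D⟩`: `α` is a (nonempty) product of arcs of the digraph `D`. -/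
def InGen [DecidableEq V] (D : V → V → Prop) (α : V → V) : Prop :=
  ∃ w : List (V × V), w ≠ [] ∧ (∀ e ∈ w, D e.1 e.2) ∧ wordEval w = α

/-- `ℓ(D, α)`: the minimal length of a word in the arcs of `D` expressing `α`. -/
def arcLen [DecidableEq V] (D : V → V → Prop) (α : V → V) : ℕ :=
  sInf {k | ∃ w : List (V × V), w.length = k ∧ (∀ e ∈ w, D e.1 e.2) ∧ wordEval w = α}

/-- `fix(α)`: the number of fixed points of `α`. -/
def fixCnt (α : V → V) : ℕ := Set.ncard {x | α x = x}

/-- `rk(α)`: the rank of `α`, i.e. the cardinality of its image. -/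
def rnk (α : V → V) : ℕ := Set.ncard (Set.range α)

/-- A set `C` is a cyclic orbit of `α` if it is a weakly connected component of the
functional digraph of `α` (edges `(x, α x)`) which is a directed cycle on at least two
vertices: equivalently, `C` is the forward orbit of a periodic point, has at least two
elements, and is closed under taking preimages. -/
def IsCyclicOrbit (α : V → V) (C : Set V) : Prop :=
  2 ≤ C.ncard ∧ (∃ x ∈ C, (∃ k, 0 < k ∧ α^[k] x = x) ∧ C = {y | ∃ k, α^[k] x = y}) ∧
    ∀ y : V, α y ∈ C → y ∈ C

/-- `cycl(α)`: the number of cyclic orbits of `α`. -/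
def cyclCnt (α : V → V) : ℕ := Set.ncard {C : Set V | IsCyclicOrbit α C}

/-- `D` is connected: any two vertices are joined by a directed path in some direction. -/
def ConnectedDigraph (D : V → V → Prop) : Prop :=
  ∀ u v : V, Relation.ReflTransGen D u v ∨ Relation.ReflTransGen D v u

/-- `D` is closed (equal to its closure): whenever `(b,a)` is an edge lying on a directed
cycle of `D` (i.e. there is a directed path from `a` back to `b`), `(a,b)` is also an edge. -/
def ClosedDigraph (D : V → V → Prop) : Prop :=
  ∀ a b : V, D b a → Relation.ReflTransGen D a b → D a b

/-- Property (★): if `v0, v1, v2` is a directed path with `d_D(v0,v2) = 2`, then every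
out-neighbour of `v1` and of `v2` lies in `{v0, v1, v2}`. -/
def StarCond (D : V → V → Prop) : Prop :=
  ∀ v0 v1 v2 : V, D v0 v1 → D v1 v2 → v0 ≠ v2 → ¬ D v0 v2 →
    ∀ u : V, (D v1 u ∨ D v2 u) → (u = v0 ∨ u = v1 ∨ u = v2)

/-- `C` is a strong component of `D`. -/
def IsSC (D : V → V → Prop) (C : Set V) : Prop :=
  ∃ v : V, C = {u | Relation.ReflTransGen D u v ∧ Relation.ReflTransGen D v u}

/-- `C1` connects to `C2`: some edge goes from `C1` to `C2`. -/
def ConnectsTo (D : V → V → Prop) (C1 C2 : Set V) : Prop :=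
  ∃ v1 ∈ C1, ∃ v2 ∈ C2, D v1 v2

/-- `C1` fully connects to `C2`: all pairs are edges. -/
def FullyConnects (D : V → V → Prop) (C1 C2 : Set V) : Prop :=
  ∀ v1 ∈ C1, ∀ v2 ∈ C2, D v1 v2

/-- A terminal strong component: it connects to no other strong component. -/
def IsTerminalSC (D : V → V → Prop) (C : Set V) : Prop :=
  IsSC D C ∧ ∀ C' : Set V, IsSC D C' → C' ≠ C → ¬ ConnectsTo D C C'

/-- Property (★★): nonterminal strong components have at most 2 vertices and terminal
strong components have at most 3 vertices. -/
def StarStarCond (D : V → V → Prop) : Prop :=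
  ∀ C : Set V, IsSC D C →
    (IsTerminalSC D C → C.ncard ≤ 3) ∧ (¬ IsTerminalSC D C → C.ncard ≤ 2)

/-- The induced subdigraph on `C` is an undirected path `a - b - c` on three vertices. -/
def IsP3 (D : V → V → Prop) (C : Set V) : Prop :=
  ∃ a b c : V, a ≠ b ∧ b ≠ c ∧ a ≠ c ∧ C = {a, b, c} ∧
    ∀ u ∈ C, ∀ w ∈ C,
      (D u w ↔ (u = a ∧ w = b) ∨ (u = b ∧ w = a) ∨ (u = b ∧ w = c) ∨ (u = c ∧ w = b))

/-- `D` has a subdigraph isomorphic to `H`: an injection mapping edges of `H` to edges of `D`. -/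
def HasSubdigraph (D : V → V → Prop) {m : ℕ} (H : Fin m → Fin m → Prop) : Prop :=
  ∃ f : Fin m → V, Function.Injective f ∧ ∀ i j : Fin m, H i j → D (f i) (f j)

/-- `Θ_k`: the directed cycle on `k` vertices. -/
def Theta (k : ℕ) : Fin k → Fin k → Prop := fun i j => (j : ℕ) = ((i : ℕ) + 1) % k

/-- `Γ1` (vertices relabelled from `{1,…,5}` to `{0,…,4}`). -/
def Gamma1 : Fin 5 → Fin 5 → Prop := fun i j =>
  ((i : ℕ), (j : ℕ)) ∈ [(0,3),(3,0),(1,3),(3,1),(2,3),(3,2),(3,4)]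

/-- `Γ2` (vertices relabelled from `{1,…,5}` to `{0,…,4}`). -/
def Gamma2 : Fin 5 → Fin 5 → Prop := fun i j =>
  ((i : ℕ), (j : ℕ)) ∈ [(0,2),(2,0),(1,2),(2,1),(2,3),(3,2),(3,4)]

/-- `Γ3` (vertices relabelled from `{1,…,4}` to `{0,…,3}`). -/
def Gamma3 : Fin 4 → Fin 4 → Prop := fun i j =>
  ((i : ℕ), (j : ℕ)) ∈ [(0,1),(1,2),(2,0),(2,3)]

/-- `Γ4` (vertices relabelled from `{1,…,5}` to `{0,…,4}`). -/
def Gamma4 : Fin 5 → Fin 5 → Prop := fun i j =>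
  ((i : ℕ), (j : ℕ)) ∈ [(0,1),(1,2),(2,3),(3,0),(3,4)]

/-- No subdigraph isomorphic to `Γ1`, `Γ2`, `Γ3`, `Γ4` or `Θ_k` for `k ≥ 5`. -/
def ForbiddenFree (D : V → V → Prop) : Prop :=
  ¬ HasSubdigraph D Gamma1 ∧ ¬ HasSubdigraph D Gamma2 ∧ ¬ HasSubdigraph D Gamma3 ∧
    ¬ HasSubdigraph D Gamma4 ∧ ∀ k : ℕ, 5 ≤ k → ¬ HasSubdigraph D (Theta k)

/-- `D` is acyclic: it has no directed cycle. -/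
def AcyclicRel (D : V → V → Prop) : Prop := ∀ v : V, ¬ Relation.TransGen D v v

/-- `ψ_A(u,w)`: the maximal number of edges of a directed path from `u` to `w` in `A`
(in particular `ψ_A(u,u) = 0`). -/
def psiLongest (A : V → V → Prop) (u w : V) : ℕ :=
  sSup {l | ∃ p : List V, p.Chain' A ∧ p.Nodup ∧
    p.head? = some u ∧ p.getLast? = some w ∧ p.length = l + 1}

/-- `d_D(u,w)`: the minimal number of edges of a directed path from `u` to `w` in `D`. -/
def ddist (D : V → V → Prop) (u w : V) : ℕ :=
  sInf {l | ∃ p : List V, p.Chain' D ∧ p.head? = some u ∧ p.getLast? = some w ∧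
    p.length = l + 1}

/-- A tournament: no loops, and exactly one of `(u,v)`, `(v,u)` is an edge for `u ≠ v`. -/
def IsTournament (D : V → V → Prop) : Prop :=
  (∀ v : V, ¬ D v v) ∧ ∀ u v : V, u ≠ v → (D u v ∨ D v u) ∧ ¬ (D u v ∧ D v u)

/-- A strong (strongly connected) digraph. -/
def IsStrongDigraph (D : V → V → Prop) : Prop :=
  ∀ u v : V, Relation.ReflTransGen D u v

/-! Each arc identifies at most two points, so a word of length `k` lowers the rank by at most
`k`, and a constant map needs at least `n - 1` arcs. Conversely, if `α` is the constant map with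
value `c`, every vertex reaches `c` in `D`; as long as some vertex has not yet been sent to `c`,
some such vertex `x` has an edge `(x, y)` with `y` already sent to `c`, and prepending the arc
`(x→y)` sends `x` to `c` as well. Starting from `{c}`, this uses one arc per vertex `x ≠ c`. -/

section Rank

variable [DecidableEq V]

lemma wordEval_nil : wordEval ([] : List (V × V)) = id := rfl

lemma wordEval_cons (e : V × V) (w : List (V × V)) (x : V) :
    wordEval (e :: w) x = wordEval w (arcMap e.1 e.2 x) := rfl

lemma ncard_le_ncard_image_arcMap_add_one (a b : V) {S : Set V} (hS : S.Finite) :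
    S.ncard ≤ (arcMap a b '' S).ncard + 1 := by
  have hsub : S ⊆ insert a (arcMap a b '' S) := by
    intro x hx
    by_cases hxa : x = a
    · exact Or.inl hxa
    · exact Or.inr ⟨x, hx, if_neg hxa⟩
  calc S.ncard ≤ (insert a (arcMap a b '' S)).ncard :=
        Set.ncard_le_ncard hsub ((hS.image _).insert a)
    _ ≤ (arcMap a b '' S).ncard + 1 := Set.ncard_insert_le a _

lemma ncard_le_ncard_image_wordEval_add_length (w : List (V × V)) {S : Set V}
    (hS : S.Finite) : S.ncard ≤ (wordEval w '' S).ncard + w.length := by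
  induction w generalizing S with
  | nil => simp [wordEval_nil]
  | cons e w ih =>
    have himage : wordEval (e :: w) '' S = wordEval w '' (arcMap e.1 e.2 '' S) := by
      rw [Set.image_image]; rfl
    have harc := ncard_le_ncard_image_arcMap_add_one e.1 e.2 hS
    have hword := ih (hS.image (arcMap e.1 e.2))
    rw [himage, List.length_cons]
    omega

lemma card_le_rnk_wordEval_add_length [Finite V] (w : List (V × V)) :
    Nat.card V ≤ rnk (wordEval w) + w.length := by
  simpa [rnk, Set.image_univ] using
    ncard_le_ncard_image_wordEval_add_length w (Set.finite_univ (α := V))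

end Rank

section Collapse

variable {D : V → V → Prop} {c : V}

lemma reflTransGen_wordEval [DecidableEq V] {w : List (V × V)} (hw : ∀ e ∈ w, D e.1 e.2)
    (x : V) : Relation.ReflTransGen D x (wordEval w x) := by
  induction w generalizing x with
  | nil => exact .refl
  | cons e w ih =>
    rw [wordEval_cons]
    refine .trans ?_ (ih (fun f hf => hw f (List.mem_cons_of_mem _ hf)) _)
    by_cases hxe : x = e.1
    · subst hxe
      simpa [arcMap] using Relation.ReflTransGen.single (hw e List.mem_cons_self)
    · simp only [arcMap, if_neg hxe]
      exact .refl

lemma exists_edge_into_of_reflTransGen {T : Set V} (hc : c ∈ T) {x : V}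
    (hx : Relation.ReflTransGen D x c) (hxT : x ∉ T) : ∃ u ∉ T, ∃ v ∈ T, D u v := by
  induction hx using Relation.ReflTransGen.head_induction_on with
  | refl => exact absurd hc hxT
  | @head x y hxy _ ih =>
    by_cases hyT : y ∈ T
    · exact ⟨x, hxT, y, hyT, hxy⟩
    · exact ih hyT

lemma exists_word_collapsing_of_lt_card [DecidableEq V] [Fintype V]
    (hreach : ∀ x, Relation.ReflTransGen D x c) {k : ℕ} (hk : k < Fintype.card V) :
    ∃ T : Finset V, c ∈ T ∧ T.card = k + 1 ∧ ∃ w : List (V × V), w.length = k ∧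
      (∀ e ∈ w, D e.1 e.2) ∧ ∀ x ∈ T, wordEval w x = c := by
  induction k with
  | zero =>
    exact ⟨{c}, Finset.mem_singleton_self c, rfl, [], rfl, by simp, by simp [wordEval_nil]⟩
  | succ k ih =>
    obtain ⟨T, hcT, hTcard, w, hwlen, hwD, hwT⟩ := ih (by omega)
    obtain ⟨x, -, hxT⟩ := Finset.exists_mem_notMem_of_card_lt_card
      (show T.card < Finset.univ.card by rw [Finset.card_univ]; omega)
    obtain ⟨u, huT, v, hvT, huv⟩ :=
      exists_edge_into_of_reflTransGen (T := T) hcT (hreach x) hxT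
    refine ⟨insert u T, Finset.mem_insert_of_mem hcT,
      by rw [Finset.card_insert_of_notMem huT, hTcard], (u, v) :: w, by simp [hwlen], ?_, ?_⟩
    · intro e he
      rcases List.mem_cons.mp he with rfl | he
      exacts [huv, hwD e he]
    · intro y hy
      rw [wordEval_cons]
      rcases Finset.mem_insert.mp hy with rfl | hyT
      · simp [arcMap, hwT v hvT]
      · have : y ≠ u := fun h => huT (h ▸ hyT)
        simp [arcMap, this, hwT y hyT]

lemma exists_word_eq_const [DecidableEq V] [Fintype V]
    (hreach : ∀ x, Relation.ReflTransGen D x c) :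
    ∃ w : List (V × V), w.length = Fintype.card V - 1 ∧ (∀ e ∈ w, D e.1 e.2) ∧
      wordEval w = fun _ => c := by
  have hpos : 0 < Fintype.card V := Fintype.card_pos_iff.mpr ⟨c⟩
  obtain ⟨T, -, hTcard, w, hwlen, hwD, hwT⟩ :=
    exists_word_collapsing_of_lt_card hreach (k := Fintype.card V - 1) (by omega)
  have hT : T = Finset.univ := Finset.eq_univ_of_card T (by omega)
  exact ⟨w, hwlen, hwD, funext fun x => hwT x (hT ▸ Finset.mem_univ x)⟩

end Collapse

theorem stmt3_general (n : ℕ) (D : Fin n → Fin n → Prop)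
    (α : Fin n → Fin n) (hα : InGen D α) (hrk : rnk α = 1) :
    arcLen D α = n - 1 := by
  obtain ⟨c, hc⟩ := Set.ncard_eq_one.mp hrk
  have hαc : α = fun _ => c := funext fun x => by
    simpa [hc] using Set.mem_range_self (f := α) x
  obtain ⟨w₀, -, hw₀D, hw₀α⟩ := hα
  have hreach (x : Fin n) : Relation.ReflTransGen D x c := by
    simpa [hw₀α, hαc] using reflTransGen_wordEval hw₀D x
  obtain ⟨w, hwlen, hwD, hwα⟩ := exists_word_eq_const hreach
  rw [Fintype.card_fin] at hwlen
  have hmem : n - 1 ∈ {k | ∃ v : List (Fin n × Fin n), v.length = k ∧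
      (∀ e ∈ v, D e.1 e.2) ∧ wordEval v = α} := ⟨w, hwlen, hwD, hαc ▸ hwα⟩
  refine le_antisymm (Nat.sInf_le hmem) (le_csInf ⟨_, hmem⟩ ?_)
  rintro _ ⟨v, rfl, -, hvα⟩
  have := card_le_rnk_wordEval_add_length v
  rw [hvα, hrk, Nat.card_eq_fintype_card, Fintype.card_fin] at this
  omega

/-- for any simple digraph `D` on `{1,…,n}` with `n ≥ 2`, if `α ∈ ⟨D⟩` has
rank `1`, then `ℓ(D, α) = n − 1`. -/
theorem stmt3 (n : ℕ) (hn : 2 ≤ n) (D : Fin n → Fin n → Prop) (hloop : ∀ v, ¬ D v v)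
    (α : Fin n → Fin n) (hα : InGen D α) (hrk : rnk α = 1) :
    arcLen D α = n - 1 :=
  stmt3_general n D α hα hrk
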